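/- Let (𝒰,γ) be a partitioned permutation on n points with γ not the identity. Then the Möbius function satisfies μ(𝒰,γ) = δ(𝒰,γ) + Σ_{k≥1} Σ (−1)^k, where the inner sum is over all tuples (π₁,…,π_k) of non-identity permutations with (0,π₁)···(0,π_k) = (𝒰,γ); moreover the number of factors k in any such factorization is bounded by |(𝒰,γ)| = 2|𝒰| − |γ|, so the sum is finite. -/

import Mathlib

open Equiv

def orbitSetoid {α : Type*} (π : Equiv.Perm α) : Setoid α where
  r := π.SameCycle
  iseqv := ⟨fun x => Equiv.Perm.SameCycle.refl π x, fun h => h.symm, fun h h' => h.trans h'⟩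

noncomputable def cycleCount {n : ℕ} (π : Equiv.Perm (Fin n)) : ℕ :=
  Nat.card (Quotient (orbitSetoid π))

noncomputable def pLen {n : ℕ} (V : Setoid (Fin n)) : ℤ :=
  (n : ℤ) - Nat.card (Quotient V)

noncomputable def permLen {n : ℕ} (π : Equiv.Perm (Fin n)) : ℤ :=
  (n : ℤ) - cycleCount π

theorem orbitSetoid_mul_le {α : Type*} (π σ : Equiv.Perm α) :
    orbitSetoid (π * σ) ≤ orbitSetoid π ⊔ orbitSetoid σ := by
  set S := orbitSetoid π ⊔ orbitSetoid σ with hS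
  have hstep : ∀ x, S.r x ((π * σ) x) := by
    intro x
    have h1 : S.r x (σ x) := Setoid.le_def.mp le_sup_right ⟨1, by simp⟩
    have h2 : S.r (σ x) (π (σ x)) := Setoid.le_def.mp le_sup_left ⟨1, by simp⟩
    exact S.iseqv.trans h1 h2
  have hpow : ∀ (k : ℤ) (x : α), S.r x (((π * σ) ^ k) x) := by
    intro k
    induction k using Int.induction_on with
    | zero => intro x; simpa using S.iseqv.refl x
    | succ k ih =>
        intro x
        have h : ((π * σ) ^ ((k : ℤ) + 1)) x = ((π * σ) ^ (k : ℤ)) ((π * σ) x) := by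
          rw [zpow_add_one]
          simp [Equiv.Perm.mul_apply]
        rw [h]
        exact S.iseqv.trans (hstep x) (ih ((π * σ) x))
    | pred k ih =>
        intro x
        have h : ((π * σ) ^ (-(k : ℤ) - 1)) x = ((π * σ) ^ (-(k : ℤ))) ((π * σ)⁻¹ x) := by
          rw [zpow_sub_one]
          simp [Equiv.Perm.mul_apply]
        rw [h]
        have hinv : S.r x ((π * σ)⁻¹ x) := by
          have h2 := hstep ((π * σ)⁻¹ x)
          simp only [Equiv.Perm.inv_def, Equiv.apply_symm_apply] at h2
          exact S.iseqv.symm h2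
        exact S.iseqv.trans hinv (ih ((π * σ)⁻¹ x))
  rw [Setoid.le_def]
  rintro x y ⟨k, hk⟩
  exact hk ▸ hpow k x

/-- A partitioned permutation: a pair `(𝒱, π)` with `𝒱` a partition of `{1,…,n}`
(encoded as a setoid on `Fin n`) coarser than the orbit partition of `π`. -/
structure PartitionedPerm (n : ℕ) where
  part : Setoid (Fin n)
  perm : Equiv.Perm (Fin n)
  hle : orbitSetoid perm ≤ part

/-- The length `|(𝒱,π)| := 2|𝒱| − |π|` of a partitioned permutation. -/
noncomputable def ppLen {n : ℕ} (a : PartitionedPerm n) : ℤ :=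
  2 * pLen a.part - permLen a.perm

/-- The product of partitioned permutations: `(𝒱,π)·(𝒲,σ) = (𝒱∨𝒲, πσ)` if the
lengths add up, and `0` (here: `none`) otherwise. -/
noncomputable def ppMul {n : ℕ} (a b : PartitionedPerm n) : Option (PartitionedPerm n) :=
  if ppLen a + ppLen b = 2 * pLen (a.part ⊔ b.part) - permLen (a.perm * b.perm)
  then some ⟨a.part ⊔ b.part, a.perm * b.perm,
        le_trans (orbitSetoid_mul_le a.perm b.perm) (sup_le_sup a.hle b.hle)⟩
  else none

/-- The full cycle `γ_n = (1,2,…,n)`. -/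
def gammaCycle (n : ℕ) : Equiv.Perm (Fin n) := finRotate n

/-- The permutation `γ_{m,n} = (1,…,m)(m+1,…,m+n)` consisting of two full cycles. -/
def gammaTwo (m n : ℕ) : Equiv.Perm (Fin (m + n)) :=
  (Equiv.permCongr finSumFinEquiv) (Equiv.sumCongr (finRotate m) (finRotate n))

/-- The partitioned permutation `(1_n, γ_n)`. -/
noncomputable def topGamma (n : ℕ) : PartitionedPerm n :=
  ⟨⊤, gammaCycle n, le_top⟩

/-- The partitioned permutation `(1_{m+n}, γ_{m,n})`. -/
noncomputable def topGammaTwo (m n : ℕ) : PartitionedPerm (m + n) :=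
  ⟨⊤, gammaTwo m n, le_top⟩

/-- `π` is a non-crossing permutation of `{1,…,n}`: `|π| + |π⁻¹γ_n| = n − 1`. -/
def IsNC {n : ℕ} (π : Equiv.Perm (Fin n)) : Prop :=
  permLen π + permLen (π⁻¹ * gammaCycle n) = (n : ℤ) - 1

theorem quotient_mk_perm_apply {n : ℕ} (a : PartitionedPerm n) (x : Fin n) :
    Quotient.mk a.part (a.perm x) = Quotient.mk a.part x :=
  (Quotient.sound (Setoid.le_def.mp a.hle ⟨1, by simp⟩)).symm

/-- The permutation induced by `π` on a block of `𝒱` (for a partitioned permutation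
`(𝒱,π)`), transported to `Fin k` where `k` is the size of the block. -/
noncomputable def blockPerm {n : ℕ} (a : PartitionedPerm n) (c : Quotient a.part) :
    Equiv.Perm (Fin (Nat.card {x : Fin n // Quotient.mk a.part x = c})) :=
  (Finite.equivFin _).permCongr
    (a.perm.subtypePerm (p := fun x => Quotient.mk a.part x = c)
      (fun x => by rw [quotient_mk_perm_apply]))

/-- A multiplicative function on partitioned permutations: its value on `(1_n, π)`
depends only on the conjugacy class of `π`, and its value on a general `(𝒱,π)`
is the product over the blocks of `𝒱` of the values on `(1_V, π|_V)`. -/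
def IsMultiplicativeFn (f : ∀ n, PartitionedPerm n → ℂ) : Prop :=
  (∀ (n : ℕ) (π σ : Equiv.Perm (Fin n)),
      f n ⟨⊤, σ * π * σ⁻¹, le_top⟩ = f n ⟨⊤, π, le_top⟩) ∧
  (∀ (n : ℕ) (a : PartitionedPerm n),
      f n a = ∏ᶠ c : Quotient a.part,
        f (Nat.card {x : Fin n // Quotient.mk a.part x = c}) ⟨⊤, blockPerm a c, le_top⟩)

/-- The convolution of functions on partitioned permutations:
`(f∗g)(𝒰,γ) = Σ_{(𝒱,π)·(𝒲,σ) = (𝒰,γ)} f(𝒱,π) g(𝒲,σ)`. -/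
noncomputable def ppConv (f g : ∀ n, PartitionedPerm n → ℂ) : ∀ n, PartitionedPerm n → ℂ :=
  fun n u =>
    ∑ᶠ p ∈ {p : PartitionedPerm n × PartitionedPerm n | ppMul p.1 p.2 = some u},
      f n p.1 * g n p.2

open Classical in
/-- The zeta function on partitioned permutations: `ζ(𝒱,π) = 1` if `𝒱 = 0_π` (disc
permutations) and `0` otherwise. -/
noncomputable def zetaFn : ∀ n, PartitionedPerm n → ℂ :=
  fun _ a => if a.part = orbitSetoid a.perm then 1 else 0

open Classical in
/-- The delta function, the unit of convolution: `δ(𝒱,π) = 1` iff `π = id` and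
`𝒱 = 0_π`. -/
noncomputable def deltaFn : ∀ n, PartitionedPerm n → ℂ :=
  fun _ a => if a.perm = 1 ∧ a.part = orbitSetoid a.perm then 1 else 0

/-- The identity partitioned permutation `(0_e, e)`. -/
def ppOne (n : ℕ) : PartitionedPerm n := ⟨orbitSetoid 1, 1, le_refl _⟩

/-- The product `(0,π₁)·(0,π₂)···(0,π_k)` of a list of partitioned permutations, with
value `none` (i.e. `0`) if any partial product vanishes. -/
noncomputable def ppListProd {n : ℕ} (l : List (PartitionedPerm n)) :
    Option (PartitionedPerm n) :=
  l.foldr (fun a o => o.bind (fun b => ppMul a b)) (some (ppOne n))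

/-! Since `ζ` is the indicator of the disc partitioned permutations `(0,π)`, the equation
`ζ ∗ μ = δ` at `u` reads `μ(u) = δ(u) - Σ μ(b)`, the sum running over the factorizations
`u = (0,π)·b` with `π ≠ id` (the factor `(0,id)` being the unit). As `|(0,π)| = |π| ≥ 1`,
each such `b` is strictly shorter than `u`, so unrolling the recursion terminates after `|u|`
steps, and the `k`-th unrolling contributes `(-1)^k` times the number of factorizations of `u`
into `k` non-identity disc factors. -/

open Finset

theorem card_quotient_le {α : Type*} [Finite α] (V : Setoid α) :
    Nat.card (Quotient V) ≤ Nat.card α :=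
  Nat.card_le_card_of_surjective _ Quotient.mk_surjective

theorem card_quotient_anti {α : Type*} [Finite α] {V W : Setoid α} (h : V ≤ W) :
    Nat.card (Quotient W) ≤ Nat.card (Quotient V) :=
  Nat.card_le_card_of_surjective (Quot.map id fun _ _ hxy => h hxy)
    fun q => q.inductionOn fun x => ⟨Quot.mk _ x, rfl⟩

theorem card_quotient_orbitSetoid_eq_iff {α : Type*} [Finite α] (π : Perm α) :
    Nat.card (Quotient (orbitSetoid π)) = Nat.card α ↔ π = 1 := by
  have hsurj := Quotient.mk_surjective (s := orbitSetoid π)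
  refine eq_comm.trans ((and_iff_right hsurj).symm.trans ?_)
  rw [← Nat.bijective_iff_surjective_and_card,
    Function.Bijective, and_iff_left hsurj]
  constructor
  · intro hinj
    ext x
    exact hinj (Quotient.sound (Perm.sameCycle_apply_left.mpr (.refl π x)))
  · rintro rfl x y hxy
    exact Perm.sameCycle_one.mp (Quotient.exact hxy)

theorem orbitSetoid_one {α : Type*} : orbitSetoid (1 : Perm α) = ⊥ :=
  Setoid.ext fun _ _ => Perm.sameCycle_one

section

variable {n : ℕ}

theorem permLen_nonneg (π : Perm (Fin n)) : 0 ≤ permLen π := by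
  have := card_quotient_le (orbitSetoid π)
  rw [Nat.card_fin] at this
  unfold permLen cycleCount
  omega

theorem permLen_eq_zero_iff {π : Perm (Fin n)} : permLen π = 0 ↔ π = 1 := by
  rw [← card_quotient_orbitSetoid_eq_iff, Nat.card_fin, permLen, cycleCount]
  omega

theorem one_le_permLen {π : Perm (Fin n)} (h : π ≠ 1) : 1 ≤ permLen π := by
  have := permLen_nonneg π
  have := permLen_eq_zero_iff.not.mpr h
  omega

theorem PartitionedPerm.ext {a b : PartitionedPerm n} (hpart : a.part = b.part)
    (hperm : a.perm = b.perm) : a = b := by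
  obtain ⟨V, π, _⟩ := a
  obtain ⟨W, σ, _⟩ := b
  subst hpart hperm
  rfl

instance : Finite (PartitionedPerm n) :=
  Finite.of_injective
    (fun a : PartitionedPerm n => ((⇑a.part : Fin n → Fin n → Prop), a.perm))
    fun _ _ h => PartitionedPerm.ext (Setoid.eq_iff_rel_eq.mpr (congrArg Prod.fst h))
      (congrArg Prod.snd h)

noncomputable instance : Fintype (PartitionedPerm n) := Fintype.ofFinite _

theorem ppLen_nonneg (a : PartitionedPerm n) : 0 ≤ ppLen a := by
  have hV := card_quotient_le a.part
  have hcoarse := card_quotient_anti a.hle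
  rw [Nat.card_fin] at hV
  unfold ppLen pLen permLen cycleCount
  omega

theorem ppLen_eq_permLen_of_part_eq {a : PartitionedPerm n} (h : a.part = orbitSetoid a.perm) :
    ppLen a = permLen a.perm := by
  rw [ppLen, h, pLen, permLen, cycleCount]
  ring

theorem ppLen_ppOne : ppLen (ppOne n) = 0 := by
  rw [ppLen_eq_permLen_of_part_eq rfl]
  exact permLen_eq_zero_iff.mpr rfl

theorem eq_ppOne_iff {a : PartitionedPerm n} :
    a = ppOne n ↔ a.perm = 1 ∧ a.part = orbitSetoid a.perm := by
  constructor
  · rintro rfl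
    exact ⟨rfl, rfl⟩
  · rintro ⟨hperm, hpart⟩
    exact PartitionedPerm.ext (hpart.trans (congrArg orbitSetoid hperm)) hperm

theorem ppLen_add_of_ppMul_eq_some {a b u : PartitionedPerm n} (h : ppMul a b = some u) :
    ppLen a + ppLen b = ppLen u := by
  unfold ppMul at h
  split_ifs at h with hlen
  cases h
  exact hlen

theorem ppMul_ppOne_left (b : PartitionedPerm n) : ppMul (ppOne n) b = some b := by
  have hpart : (ppOne n).part ⊔ b.part = b.part :=
    sup_eq_right.mpr (orbitSetoid_one.trans_le bot_le)
  have hperm : (ppOne n).perm * b.perm = b.perm := one_mul _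
  rw [ppMul, if_pos (by rw [hpart, hperm, ppLen_ppOne, zero_add]; rfl)]
  exact congrArg some (PartitionedPerm.ext hpart hperm)

def discFactorizations (k : ℕ) (u : PartitionedPerm n) : Set (List (PartitionedPerm n)) :=
  {l | l.length = k ∧ (∀ a ∈ l, a.part = orbitSetoid a.perm ∧ a.perm ≠ 1) ∧
    ppListProd l = some u}

open Classical in
noncomputable def discFactorPairs (u : PartitionedPerm n) :
    Finset (PartitionedPerm n × PartitionedPerm n) :=
  {p | ppMul p.1 p.2 = some u ∧ p.1.part = orbitSetoid p.1.perm ∧ p.1.perm ≠ 1}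

theorem mem_discFactorPairs {u : PartitionedPerm n}
    {p : PartitionedPerm n × PartitionedPerm n} :
    p ∈ discFactorPairs u ↔
      ppMul p.1 p.2 = some u ∧ p.1.part = orbitSetoid p.1.perm ∧ p.1.perm ≠ 1 := by
  simp [discFactorPairs]

theorem ppLen_lt_of_mem_discFactorPairs {u a b : PartitionedPerm n}
    (hab : (a, b) ∈ discFactorPairs u) : ppLen b < ppLen u := by
  obtain ⟨hmul, hdisc, hne⟩ := mem_discFactorPairs.mp hab
  dsimp only at hmul hdisc hne
  have := ppLen_add_of_ppMul_eq_some hmul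
  have := one_le_permLen hne
  rw [← ppLen_eq_permLen_of_part_eq hdisc] at this
  omega

theorem cons_mem_discFactorizations_iff {k : ℕ} {u a : PartitionedPerm n}
    {t : List (PartitionedPerm n)} :
    a :: t ∈ discFactorizations (k + 1) u ↔
      ∃ b, (a, b) ∈ discFactorPairs u ∧ t ∈ discFactorizations k b := by
  simp only [discFactorizations, Set.mem_ofPred_eq, mem_discFactorPairs, List.length_cons,
    List.forall_mem_cons, ppListProd, List.foldr_cons, Option.bind_eq_some_iff]
  constructor
  · rintro ⟨hlen, ⟨ha, hrest⟩, b, hb, hab⟩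
    exact ⟨b, ⟨hab, ha⟩, by omega, hrest, hb⟩
  · rintro ⟨b, ⟨hab, ha⟩, hlen, hrest, hb⟩
    exact ⟨by omega, ⟨ha, hrest⟩, b, hb, hab⟩

theorem length_le_ppLen {k : ℕ} {u : PartitionedPerm n} {l : List (PartitionedPerm n)}
    (hl : l ∈ discFactorizations k u) : (k : ℤ) ≤ ppLen u := by
  induction l generalizing k u with
  | nil =>
    obtain ⟨rfl, -, -⟩ := hl
    exact ppLen_nonneg u
  | cons a t ih =>
    cases k with
    | zero => exact absurd hl.1 (by simp)
    | succ k =>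
      obtain ⟨b, hab, ht⟩ := cons_mem_discFactorizations_iff.mp hl
      have := ppLen_lt_of_mem_discFactorPairs hab
      have := ih ht
      push_cast
      omega

theorem discFactorizations_eq_empty {k : ℕ} {u : PartitionedPerm n} (h : ppLen u < k) :
    discFactorizations k u = ∅ :=
  Set.eq_empty_of_forall_notMem fun _ hl => (length_le_ppLen hl).not_gt h

instance (k : ℕ) (u : PartitionedPerm n) : Finite (discFactorizations k u) :=
  ((List.finite_length_eq _ k).subset fun _ hl => hl.1).to_subtype

theorem card_discFactorizations_zero (u : PartitionedPerm n) :
    (Nat.card (discFactorizations 0 u) : ℂ) = deltaFn n u := by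
  have hmem {l} : l ∈ discFactorizations 0 u ↔ l = [] ∧ ppOne n = u := by
    simp only [discFactorizations, Set.mem_ofPred_eq, List.length_eq_zero_iff]
    constructor
    · rintro ⟨rfl, -, h⟩
      exact ⟨rfl, Option.some_injective _ h⟩
    · rintro ⟨rfl, rfl⟩
      exact ⟨rfl, by simp, rfl⟩
  by_cases hu : u = ppOne n
  · have : discFactorizations 0 u = {[]} := Set.ext fun _ => hmem.trans (by simp [hu])
    rw [this, Nat.card_unique, deltaFn, if_pos (eq_ppOne_iff.mp hu), Nat.cast_one]
  · have : discFactorizations 0 u = ∅ := Set.ext fun _ => hmem.trans (by simp [Ne.symm hu])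
    rw [this, Nat.card_of_isEmpty, deltaFn, if_neg (mt eq_ppOne_iff.mpr hu), Nat.cast_zero]

theorem card_discFactorizations_succ (k : ℕ) (u : PartitionedPerm n) :
    Nat.card (discFactorizations (k + 1) u) =
      ∑ p ∈ discFactorPairs u, Nat.card (discFactorizations k p.2) := by
  let cons : (Σ p : discFactorPairs u, discFactorizations k p.1.2) →
      discFactorizations (k + 1) u :=
    fun x => ⟨x.1.1.1 :: x.2.1, cons_mem_discFactorizations_iff.mpr ⟨_, x.1.2, x.2.2⟩⟩
  have hcons : Function.Bijective cons := by
    constructor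
    · rintro ⟨⟨⟨a, b⟩, hab⟩, t, ht⟩ ⟨⟨⟨a', b'⟩, hab'⟩, t', ht'⟩ h
      simp only [cons, Subtype.mk.injEq, List.cons.injEq] at h
      obtain ⟨rfl, rfl⟩ := h
      obtain rfl : b = b' := Option.some_injective _ (ht.2.2.symm.trans ht'.2.2)
      rfl
    · rintro ⟨_ | ⟨a, t⟩, hl⟩
      · exact absurd hl.1 (by simp)
      · obtain ⟨b, hab, ht⟩ := cons_mem_discFactorizations_iff.mp hl
        exact ⟨⟨⟨(a, b), hab⟩, t, ht⟩, rfl⟩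
  rw [← Nat.card_eq_of_bijective cons hcons, Nat.card_sigma]
  exact sum_coe_sort (discFactorPairs u) fun p => Nat.card (discFactorizations k p.2)

theorem ppConv_zetaFn_apply (g : ∀ n, PartitionedPerm n → ℂ) (u : PartitionedPerm n) :
    ppConv zetaFn g n u = g n u + ∑ p ∈ discFactorPairs u, g n p.2 := by
  classical
  have hdisc : ({p | ppMul p.1 p.2 = some u ∧ p.1.part = orbitSetoid p.1.perm} :
      Finset (PartitionedPerm n × PartitionedPerm n)) =
        insert (ppOne n, u) (discFactorPairs u) := by
    ext ⟨a, b⟩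
    simp only [mem_filter, mem_univ, true_and, mem_insert, Prod.mk.injEq, mem_discFactorPairs]
    by_cases ha : a.perm = 1
    · constructor
      · rintro ⟨hmul, hpart⟩
        obtain rfl := eq_ppOne_iff.mpr ⟨ha, hpart⟩
        rw [ppMul_ppOne_left] at hmul
        exact .inl ⟨rfl, Option.some_injective _ hmul⟩
      · rintro (⟨rfl, rfl⟩ | ⟨-, -, hne⟩)
        · exact ⟨ppMul_ppOne_left _, rfl⟩
        · exact absurd ha hne
    · have : a ≠ ppOne n := fun h => ha (h ▸ rfl)
      simp [ha, this]
  rw [ppConv, finsum_mem_eq_toFinset_sum, Set.toFinset_ofPred]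
  have hzeta (p : PartitionedPerm n × PartitionedPerm n) : zetaFn n p.1 * g n p.2 =
      if p.1.part = orbitSetoid p.1.perm then g n p.2 else 0 := by
    simp only [zetaFn, ite_mul, one_mul, zero_mul]
  rw [sum_congr rfl fun p _ => hzeta p, ← sum_filter, filter_filter, hdisc,
    sum_insert (by simp [mem_discFactorPairs, ppOne])]

theorem mobius_eq_deltaFn_sub_sum {μ : ∀ n, PartitionedPerm n → ℂ}
    (hζμ : ppConv zetaFn μ = deltaFn) (u : PartitionedPerm n) :
    μ n u = deltaFn n u - ∑ p ∈ discFactorPairs u, μ n p.2 := by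
  rw [eq_sub_iff_add_eq, ← ppConv_zetaFn_apply, hζμ]

theorem mobius_eq_sum_range {μ : ∀ n, PartitionedPerm n → ℂ}
    (hζμ : ppConv zetaFn μ = deltaFn) (N : ℕ) (u : PartitionedPerm n) (hN : ppLen u < N) :
    μ n u = ∑ k ∈ range N, (-1 : ℂ) ^ k * Nat.card (discFactorizations k u) := by
  induction N generalizing u with
  | zero => exact absurd (ppLen_nonneg u) (by push_cast at hN; omega)
  | succ N ih =>
    have hfactors : ∀ p ∈ discFactorPairs u,
        μ n p.2 = ∑ k ∈ range N, (-1 : ℂ) ^ k * Nat.card (discFactorizations k p.2) := by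
      rintro ⟨a, b⟩ hab
      have := ppLen_lt_of_mem_discFactorPairs hab
      exact ih b (by push_cast at hN ⊢; omega)
    have hsucc (k : ℕ) :
        ∑ p ∈ discFactorPairs u, (-1 : ℂ) ^ k * Nat.card (discFactorizations k p.2) =
          (-1) ^ k * Nat.card (discFactorizations (k + 1) u) := by
      rw [← mul_sum, card_discFactorizations_succ, Nat.cast_sum]
    rw [mobius_eq_deltaFn_sub_sum hζμ, sum_congr rfl hfactors, sum_comm,
      sum_congr rfl fun k _ => hsucc k, sum_range_succ', ← card_discFactorizations_zero]
    simp only [pow_succ, mul_neg_one, neg_mul, sum_neg_distrib, pow_zero, one_mul]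
    ring

end

theorem mobius_geometric_series_general (μ : ∀ n, PartitionedPerm n → ℂ)
    (hζμ : ppConv zetaFn μ = deltaFn)
    (n : ℕ) (u : PartitionedPerm n) :
    (∀ k : ℕ, ppLen u < (k : ℤ) →
      {l : List (PartitionedPerm n) | l.length = k ∧
        (∀ a ∈ l, a.part = orbitSetoid a.perm ∧ a.perm ≠ 1) ∧
        ppListProd l = some u} = ∅) ∧
    μ n u = deltaFn n u + ∑ k ∈ Finset.Icc 1 (ppLen u).toNat,
      (-1 : ℂ) ^ k * (Nat.card {l : List (PartitionedPerm n) // l.length = k ∧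
        (∀ a ∈ l, a.part = orbitSetoid a.perm ∧ a.perm ≠ 1) ∧
        ppListProd l = some u} : ℂ) := by
  refine ⟨fun k hk => discFactorizations_eq_empty hk, ?_⟩
  rw [mobius_eq_sum_range hζμ ((ppLen u).toNat + 1) u (by omega), range_eq_Ico,
    sum_eq_sum_Ico_succ_bot (Nat.succ_pos _), zero_add, Nat.succ_eq_add_one,
    Ico_add_one_right_eq_Icc, pow_zero, one_mul, card_discFactorizations_zero]
  rfl

/-- For a partitioned permutation `(𝒰,γ)` with `γ` not the identity, the Möbius function
satisfies `μ(𝒰,γ) = δ(𝒰,γ) + Σ_{k≥1} Σ (−1)^k`, the inner sum being over all tuples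
`(π₁,…,π_k)` of non-identity disc permutations with `(0,π₁)···(0,π_k) = (𝒰,γ)`;
moreover the number of factors `k` in any such factorization is bounded by
`|(𝒰,γ)| = 2|𝒰| − |γ|`, so the sum is finite. -/
theorem mobius_geometric_series (μ : ∀ n, PartitionedPerm n → ℂ)
    (hmult : IsMultiplicativeFn μ)
    (hζμ : ppConv zetaFn μ = deltaFn) (hμζ : ppConv μ zetaFn = deltaFn)
    (n : ℕ) (u : PartitionedPerm n) (hγ : u.perm ≠ 1) :
    (∀ k : ℕ, ppLen u < (k : ℤ) →
      {l : List (PartitionedPerm n) | l.length = k ∧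
        (∀ a ∈ l, a.part = orbitSetoid a.perm ∧ a.perm ≠ 1) ∧
        ppListProd l = some u} = ∅) ∧
    μ n u = deltaFn n u + ∑ k ∈ Finset.Icc 1 (ppLen u).toNat,
      (-1 : ℂ) ^ k * (Nat.card {l : List (PartitionedPerm n) // l.length = k ∧
        (∀ a ∈ l, a.part = orbitSetoid a.perm ∧ a.perm ≠ 1) ∧
        ppListProd l = some u} : ℂ) :=
  mobius_geometric_series_general μ hζμ n u
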